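/- arXiv:2108.10611 — 2 statements merged into one kernel-verified Lean document; each statement's English description precedes it below -/
import Mathlib

section
/- Let f : D → ℝ and g : D → ℝ be bounded non-constant functions on the same nonempty domain D with spans (i_f, s_f) and (i_g, s_g) respectively. If f and g have the same shape (f̄(x) = ḡ(x) for all x ∈ D), then for all x ∈ D: g(x) = ((s_g − i_g)/(s_f − i_f))·f(x) + i_g − i_f·(s_g − i_g)/(s_f − i_f), where the multiplicative constant (s_g − i_g)/(s_f − i_f) is strictly positive. -/
/-- The shape of a bounded non-constant function `f : D → ℝ`:
`f̄(x) = (f(x) - inf f(D)) / (sup f(D) - inf f(D))`. -/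
noncomputable def shape {D : Type*} (f : D → ℝ) : D → ℝ :=
  fun x => (f x - sInf (Set.range f)) / (sSup (Set.range f) - sInf (Set.range f))

lemma span_pos_of_nc {D : Type*} (f : D → ℝ)
    (hfb : BddBelow (Set.range f)) (hfa : BddAbove (Set.range f))
    (hfnc : ∃ x y : D, f x ≠ f y) :
    sInf (Set.range f) < sSup (Set.range f) := by
  obtain ⟨x, y, hxy⟩ := hfnc
  rcases lt_or_gt_of_ne hxy with h | h
  · exact lt_of_le_of_lt (csInf_le hfb ⟨x, rfl⟩)
      (lt_of_lt_of_le h (le_csSup hfa ⟨y, rfl⟩))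
  · exact lt_of_le_of_lt (csInf_le hfb ⟨y, rfl⟩)
      (lt_of_lt_of_le h (le_csSup hfa ⟨x, rfl⟩))

/-- If two bounded non-constant functions `f, g : D → ℝ` on the same nonempty
domain have the same shape, then, writing `(i_f, s_f)` and `(i_g, s_g)` for
their spans, for all `x ∈ D`:
`g(x) = ((s_g - i_g)/(s_f - i_f)) * f(x) + i_g - i_f * (s_g - i_g)/(s_f - i_f)`,
and the multiplicative constant `(s_g - i_g)/(s_f - i_f)` is strictly
positive. -/
theorem shape_eq_imp_affine_formula {D : Type*} [Nonempty D] (f g : D → ℝ)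
    (hfb : BddBelow (Set.range f)) (hfa : BddAbove (Set.range f))
    (hgb : BddBelow (Set.range g)) (hga : BddAbove (Set.range g))
    (hfnc : ∃ x y : D, f x ≠ f y) (hgnc : ∃ x y : D, g x ≠ g y)
    (hshape : ∀ x : D, shape f x = shape g x) :
    0 < (sSup (Set.range g) - sInf (Set.range g)) /
        (sSup (Set.range f) - sInf (Set.range f)) ∧
    ∀ x : D,
      g x = (sSup (Set.range g) - sInf (Set.range g)) /
              (sSup (Set.range f) - sInf (Set.range f)) * f x +
            sInf (Set.range g) -
            sInf (Set.range f) *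
              ((sSup (Set.range g) - sInf (Set.range g)) /
                (sSup (Set.range f) - sInf (Set.range f))) := by
  have hf := span_pos_of_nc f hfb hfa hfnc
  have hg := span_pos_of_nc g hgb hga hgnc
  have hf' : sSup (Set.range f) - sInf (Set.range f) ≠ 0 := by linarith
  have hg' : sSup (Set.range g) - sInf (Set.range g) ≠ 0 := by linarith
  constructor
  · exact div_pos (by linarith) (by linarith)
  · intro x
    have h := hshape x
    unfold shape at h
    field_simp at h ⊢
    nlinarith [h]
end

section
/- Let ω > 0, K ≥ 1, and let u(t) = a_0/2 + Σ_{k=1}^{K} (a_k cos(kωt) + b_k sin(kωt)) and v(t) = a'_0/2 + Σ_{k=1}^{K} (a'_k cos(kωt) + b'_k sin(kωt)) be trigonometric polynomials whose amplitude vectors H_u = (a_1, b_1, …, a_K, b_K) and H_v = (a'_1, b'_1, …, a'_K, b'_K) are both nonzero. Suppose there exists c > 0 such that a'_k = c·a_k and b'_k = c·b_k for all 1 ≤ k ≤ K (i.e., H_u and H_v have the same direction), and suppose inf of the range of u equals inf of the range of v and sup of the range of u equals sup of the range of v (i.e., u and v have the same span). Then u(t) = v(t) for all t ∈ ℝ.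 -/
open Real

/-!
Equal directions make `v = c • u + d` for some `c > 0` and `d`, so the increasing affine map
`x ↦ c x + d` sends the span `(inf u, sup u)` to the span of `v`. Equal spans mean that this map
fixes both ends of the span of `u`; an affine map of the line fixing two points fixes the segment
between them, which contains every value of `u`.
-/

noncomputable def trigPoly (ω : ℝ) (K : ℕ) (a b : ℕ → ℝ) (t : ℝ) : ℝ :=
  a 0 / 2 + ∑ k ∈ Finset.Icc 1 K, (a k * cos (k * ω * t) + b k * sin (k * ω * t))

theorem trigPoly_eq_mul_add_of_coeff_eq_mul {ω c : ℝ} {K : ℕ} {a b a' b' : ℕ → ℝ}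
    (h : ∀ k ∈ Finset.Icc 1 K, a' k = c * a k ∧ b' k = c * b k) (t : ℝ) :
    trigPoly ω K a' b' t = c * trigPoly ω K a b t + (a' 0 / 2 - c * (a 0 / 2)) := by
  have hsum : ∑ k ∈ Finset.Icc 1 K, (a' k * cos (k * ω * t) + b' k * sin (k * ω * t)) =
      c * ∑ k ∈ Finset.Icc 1 K, (a k * cos (k * ω * t) + b k * sin (k * ω * t)) := by
    rw [Finset.mul_sum]
    refine Finset.sum_congr rfl fun k hk => ?_
    rw [(h k hk).1, (h k hk).2]
    ring
  rw [trigPoly, trigPoly, hsum]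
  ring

theorem abs_trigPoly_le (ω : ℝ) (K : ℕ) (a b : ℕ → ℝ) (t : ℝ) :
    |trigPoly ω K a b t| ≤ |a 0 / 2| + ∑ k ∈ Finset.Icc 1 K, (|a k| + |b k|) := by
  refine (abs_add_le _ _).trans (add_le_add_right ?_ _)
  refine (Finset.abs_sum_le_sum_abs _ _).trans (Finset.sum_le_sum fun k _ => ?_)
  refine (abs_add_le _ _).trans (add_le_add ?_ ?_) <;> rw [abs_mul]
  · exact mul_le_of_le_one_right (abs_nonneg _) (abs_cos_le_one _)
  · exact mul_le_of_le_one_right (abs_nonneg _) (abs_sin_le_one _)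

theorem isBounded_range_trigPoly (ω : ℝ) (K : ℕ) (a b : ℕ → ℝ) :
    Bornology.IsBounded (Set.range (trigPoly ω K a b)) :=
  isBounded_iff_forall_norm_le.2 ⟨_, Set.forall_mem_range.2 (abs_trigPoly_le ω K a b)⟩

theorem csSup_image_mul_add {s : Set ℝ} {c : ℝ} (d : ℝ) (hc : 0 ≤ c) (hne : s.Nonempty)
    (hbdd : BddAbove s) : sSup ((c * · + d) '' s) = c * sSup s + d :=
  ((monotone_id.const_mul hc).add_const d |>.map_csSup_of_continuousAt
    (by fun_prop) hne hbdd).symm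

theorem csInf_image_mul_add {s : Set ℝ} {c : ℝ} (d : ℝ) (hc : 0 ≤ c) (hne : s.Nonempty)
    (hbdd : BddBelow s) : sInf ((c * · + d) '' s) = c * sInf s + d :=
  ((monotone_id.const_mul hc).add_const d |>.map_csInf_of_continuousAt
    (by fun_prop) hne hbdd).symm

theorem mul_add_eq_self_of_mem_Icc {c d x y z : ℝ} (hx : c * x + d = x) (hy : c * y + d = y)
    (hz : z ∈ Set.Icc x y) : c * z + d = z := by
  rcases hz.1.eq_or_lt with rfl | hxz
  · exact hx
  have hc : c = 1 := by
    have : (c - 1) * (y - x) = 0 := by linarith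
    exact sub_eq_zero.1 ((mul_eq_zero.1 this).resolve_right (by linarith [hz.2]))
  subst hc
  linarith

theorem trig_poly_eq_of_direction_eq_of_span_eq_general
    (ω : ℝ) (K : ℕ)
    (a b a' b' : ℕ → ℝ) (u v : ℝ → ℝ)
    (hu : ∀ t : ℝ, u t = a 0 / 2 +
      ∑ k ∈ Finset.Icc 1 K, (a k * Real.cos (k * ω * t) + b k * Real.sin (k * ω * t)))
    (hv : ∀ t : ℝ, v t = a' 0 / 2 +
      ∑ k ∈ Finset.Icc 1 K, (a' k * Real.cos (k * ω * t) + b' k * Real.sin (k * ω * t)))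
    (hdir : ∃ c : ℝ, 0 < c ∧ ∀ k ∈ Finset.Icc 1 K, a' k = c * a k ∧ b' k = c * b k)
    (hinf : sInf (Set.range u) = sInf (Set.range v))
    (hsup : sSup (Set.range u) = sSup (Set.range v)) :
    ∀ t : ℝ, u t = v t := by
  obtain ⟨c, hc, hcoef⟩ := hdir
  have hu' : u = trigPoly ω K a b := funext hu
  have hvu : v = (c * · + (a' 0 / 2 - c * (a 0 / 2))) ∘ u := funext fun t => by
    rw [hv, Function.comp_apply, hu']
    exact trigPoly_eq_mul_add_of_coeff_eq_mul hcoef t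
  have hbdd : Bornology.IsBounded (Set.range u) := hu' ▸ isBounded_range_trigPoly ω K a b
  have hne : (Set.range u).Nonempty := Set.range_nonempty u
  rw [hvu, Set.range_comp] at hinf hsup
  rw [csInf_image_mul_add _ hc.le hne hbdd.bddBelow] at hinf
  rw [csSup_image_mul_add _ hc.le hne hbdd.bddAbove] at hsup
  intro t
  rw [hvu]
  exact (mul_add_eq_self_of_mem_Icc hinf.symm hsup.symm
    ⟨csInf_le hbdd.bddBelow ⟨t, rfl⟩, le_csSup hbdd.bddAbove ⟨t, rfl⟩⟩).symm

/-- (Paper's Theorem 5, essential content.) Let `ω > 0`, `K ≥ 1` and let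
`u(t) = a_0/2 + Σ_{k=1}^{K} (a_k cos(kωt) + b_k sin(kωt))` and
`v(t) = a'_0/2 + Σ_{k=1}^{K} (a'_k cos(kωt) + b'_k sin(kωt))` be trigonometric
polynomials with nonzero amplitude vectors. If the amplitude vectors have the
same direction (there is `c > 0` with `a'_k = c * a_k`, `b'_k = c * b_k` for
all `1 ≤ k ≤ K`) and `u` and `v` have the same span (equal infima and equal
suprema of their ranges), then `u = v`. -/
theorem trig_poly_eq_of_direction_eq_of_span_eq
    (ω : ℝ) (hω : 0 < ω) (K : ℕ) (hK : 1 ≤ K)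
    (a b a' b' : ℕ → ℝ) (u v : ℝ → ℝ)
    (hu : ∀ t : ℝ, u t = a 0 / 2 +
      ∑ k ∈ Finset.Icc 1 K, (a k * Real.cos (k * ω * t) + b k * Real.sin (k * ω * t)))
    (hv : ∀ t : ℝ, v t = a' 0 / 2 +
      ∑ k ∈ Finset.Icc 1 K, (a' k * Real.cos (k * ω * t) + b' k * Real.sin (k * ω * t)))
    (hHu : ∃ k ∈ Finset.Icc 1 K, a k ≠ 0 ∨ b k ≠ 0)
    (hHv : ∃ k ∈ Finset.Icc 1 K, a' k ≠ 0 ∨ b' k ≠ 0)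
    (hdir : ∃ c : ℝ, 0 < c ∧ ∀ k ∈ Finset.Icc 1 K, a' k = c * a k ∧ b' k = c * b k)
    (hinf : sInf (Set.range u) = sInf (Set.range v))
    (hsup : sSup (Set.range u) = sSup (Set.range v)) :
    ∀ t : ℝ, u t = v t :=
  trig_poly_eq_of_direction_eq_of_span_eq_general ω K a b a' b' u v hu hv hdir hinf hsup
end
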